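/- arXiv:1711.10210 — 2 statements merged into one kernel-verified Lean document; each statement's English description precedes it below -/
import Mathlib

section
/- Let f be a ceded loss function (f and x ↦ x - f(x) increasing, 0 ≤ f(x) ≤ x), X a nonnegative integrable random variable, α ∈ (0,1], and define the layer function h(x) = min{(x - (VaR_α(X) - f(VaR_α(X))))₊, f(VaR_α(X))}. Then h(x) ≤ f(x) for all x ≥ 0, and VaR_α(X - h(X)) = VaR_α(X - f(X)). -/
open MeasureTheory ProbabilityTheory Set

noncomputable section

variable {Ω Ω' : Type*} [MeasurableSpace Ω] [MeasurableSpace Ω']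

/-- Distribution function of a random variable. -/
def distFun (μ : Measure Ω) (X : Ω → ℝ) (x : ℝ) : ℝ := (μ {ω | X ω ≤ x}).toReal

/-- Value-at-Risk at level α: `VaR_α(X) = inf {x | F_X(x) ≥ 1-α}`. -/
def VaR (μ : Measure Ω) (X : Ω → ℝ) (α : ℝ) : ℝ := sInf {x | 1 - α ≤ distFun μ X x}

/-- Range-Value-at-Risk with parameters α, β (for β > 0). -/
def RVaR (μ : Measure Ω) (X : Ω → ℝ) (α β : ℝ) : ℝ := (1/β) * ∫ s in α..(α+β), VaR μ X s

/-- Usual stochastic order. -/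
def le_st (μ : Measure Ω) (X : Ω → ℝ) (ν : Measure Ω') (Y : Ω' → ℝ) : Prop :=
  ∀ f : ℝ → ℝ, Monotone f → Integrable (fun ω => f (X ω)) μ →
    Integrable (fun ω => f (Y ω)) ν → ∫ ω, f (X ω) ∂μ ≤ ∫ ω, f (Y ω) ∂ν

/-- Convex order. -/
def le_cx (μ : Measure Ω) (X : Ω → ℝ) (ν : Measure Ω') (Y : Ω' → ℝ) : Prop :=
  ∀ f : ℝ → ℝ, ConvexOn ℝ univ f → Integrable (fun ω => f (X ω)) μ →
    Integrable (fun ω => f (Y ω)) ν → ∫ ω, f (X ω) ∂μ ≤ ∫ ω, f (Y ω) ∂ν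

/-- Increasing convex order. -/
def le_icx (μ : Measure Ω) (X : Ω → ℝ) (ν : Measure Ω') (Y : Ω' → ℝ) : Prop :=
  ∀ f : ℝ → ℝ, Monotone f → ConvexOn ℝ univ f → Integrable (fun ω => f (X ω)) μ →
    Integrable (fun ω => f (Y ω)) ν → ∫ ω, f (X ω) ∂μ ≤ ∫ ω, f (Y ω) ∂ν

/-- Admissible ceded loss functions: `0 ≤ f(x) ≤ x` with both `f` and the
retained loss `x - f(x)` increasing. -/
def Ceded (f : ℝ → ℝ) : Prop :=
  Monotone f ∧ Monotone (fun x => x - f x) ∧ ∀ x, 0 ≤ x → 0 ≤ f x ∧ f x ≤ x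

/-- Layer reinsurance treaty with deductible `a` and upper bound `b`. -/
def layer (a b x : ℝ) : ℝ := min (max (x - a) 0) b

/-- Joint distribution function of a random vector. -/
def jointCDF {n : ℕ} (μ : Measure Ω) (X : Fin n → Ω → ℝ) (x : Fin n → ℝ) : ℝ :=
  (μ {ω | ∀ i, X i ω ≤ x i}).toReal

/-- All one-dimensional marginals are uniform on [0,1]. -/
def uniformMarginals {n : ℕ} (ν : Measure (Fin n → ℝ)) : Prop :=
  ∀ i, Measure.map (fun u => u i) ν = volume.restrict (Icc (0:ℝ) 1)

/-- `C` is (the distribution function of) an `n`-dimensional copula. -/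
def IsCopula {n : ℕ} (C : (Fin n → ℝ) → ℝ) : Prop :=
  ∃ ν : Measure (Fin n → ℝ), IsProbabilityMeasure ν ∧ uniformMarginals ν ∧
    ∀ x, C x = (ν {u | ∀ i, u i ≤ x i}).toReal

/-- `C` is a copula of the random vector `X`. -/
def HasCopula {n : ℕ} (μ : Measure Ω) (X : Fin n → Ω → ℝ) (C : (Fin n → ℝ) → ℝ) : Prop :=
  IsCopula C ∧ ∀ x : Fin n → ℝ, jointCDF μ X x = C (fun i => distFun μ (X i) (x i))

/-- Positively dependent through the stochastic ordering: for each `i`,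
`E[f(X_{-i}) | X_i = x]` is increasing in `x` for every componentwise increasing `f`
(not depending on coordinate `i`). -/
def PDS {n : ℕ} (μ : Measure Ω) (X : Fin n → Ω → ℝ) : Prop :=
  ∀ i : Fin n, ∀ f : (Fin n → ℝ) → ℝ, Monotone f →
    (∀ a b : Fin n → ℝ, (∀ j, j ≠ i → a j = b j) → f a = f b) →
    ∃ g : ℝ → ℝ, Monotone g ∧
      (μ[(fun ω => f (fun j => X j ω)) | MeasurableSpace.comap (X i) (borel ℝ)]
        =ᵐ[μ] fun ω => g (X i ω))

/-- `C` is a PDS copula. -/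
def IsPDSCopula {n : ℕ} (C : (Fin n → ℝ) → ℝ) : Prop :=
  ∃ ν : Measure (Fin n → ℝ), IsProbabilityMeasure ν ∧ uniformMarginals ν ∧
    (∀ x, C x = (ν {u | ∀ i, u i ≤ x i}).toReal) ∧ PDS ν (fun i u => u i)

/-- Positive orthant dependence. -/
def POD {n : ℕ} (μ : Measure Ω) (X : Fin n → Ω → ℝ) : Prop :=
  ∀ x : Fin n → ℝ,
    (∏ i, (μ {ω | X i ω ≤ x i}).toReal) ≤ (μ {ω | ∀ i, X i ω ≤ x i}).toReal ∧
    (∏ i, (μ {ω | x i < X i ω}).toReal) ≤ (μ {ω | ∀ i, x i < X i ω}).toReal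

/-- A comonotone random vector. -/
def Comonotone {m : ℕ} (Z : Fin m → Ω → ℝ) : Prop :=
  ∀ i j ω ω', 0 ≤ (Z i ω - Z i ω') * (Z j ω - Z j ω')

/-! The retained losses `x ↦ x - f x` and `x ↦ x - h x` are increasing and continuous (`f` is
1-Lipschitz), and they agree at `m = VaR_α(X)` because `h m = f m`. For `α < 1` the infimum
defining `VaR_α(X)` is attained, by right-continuity of the distribution function, and then VaR
commutes with increasing left-continuous maps, so both retained losses have VaR `m - f m`.
For `α = 1` every VaR is the junk value `sInf univ = 0`. -/

open Filter Topology

theorem StieltjesFunction.isLeast_sInf_setOf_le (F : StieltjesFunction ℝ) {p : ℝ}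
    (hne : {x | p ≤ F x}.Nonempty) (hbdd : BddBelow {x | p ≤ F x}) :
    IsLeast {x | p ≤ F x} (sInf {x | p ≤ F x}) := by
  refine ⟨?_, fun x hx => csInf_le hbdd hx⟩
  refine ge_of_tendsto ((F.right_continuous _).mono Ioi_subset_Ici_self)
    (eventually_nhdsWithin_of_forall fun x hx => ?_)
  obtain ⟨s, hs, hsx⟩ := exists_lt_of_csInf_lt hne hx
  exact hs.trans (F.mono hsx.le)

theorem isLeast_sInf_setOf_le_cdf (ν : Measure ℝ) [IsProbabilityMeasure ν] {p : ℝ}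
    (hp0 : 0 < p) (hp1 : p < 1) :
    IsLeast {x | p ≤ cdf ν x} (sInf {x | p ≤ cdf ν x}) := by
  refine (cdf ν).isLeast_sInf_setOf_le ?_ ?_
  · obtain ⟨x, hx⟩ := ((tendsto_cdf_atTop ν).eventually (lt_mem_nhds hp1)).exists
    exact ⟨x, hx.le⟩
  · obtain ⟨x₀, hx₀⟩ := eventually_atBot.1 ((tendsto_cdf_atBot ν).eventually (gt_mem_nhds hp0))
    exact ⟨x₀, fun x hx => le_of_not_ge fun hxx₀ => (hx₀ x hxx₀).not_ge hx⟩

theorem distFun_eq_cdf_map (μ : Measure Ω) [IsProbabilityMeasure μ] {X : Ω → ℝ}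
    (hX : AEMeasurable X μ) : distFun μ X = cdf (μ.map X) := by
  have := Measure.isProbabilityMeasure_map (μ := μ) hX
  ext x
  rw [cdf_eq_real, measureReal_def, Measure.map_apply_of_aemeasurable hX measurableSet_Iic]
  rfl

theorem distFun_le_of_forall_imp (μ : Measure Ω) [IsFiniteMeasure μ] {X Y : Ω → ℝ}
    {x y : ℝ} (h : ∀ ω, Y ω ≤ y → X ω ≤ x) : distFun μ Y y ≤ distFun μ X x :=
  measureReal_mono h

theorem isLeast_VaR (μ : Measure Ω) [IsProbabilityMeasure μ] {X : Ω → ℝ}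
    (hX : AEMeasurable X μ) {α : ℝ} (hα0 : 0 < α) (hα1 : α < 1) :
    IsLeast {x | 1 - α ≤ distFun μ X x} (VaR μ X α) := by
  have := Measure.isProbabilityMeasure_map (μ := μ) hX
  rw [VaR, distFun_eq_cdf_map μ hX]
  exact isLeast_sInf_setOf_le_cdf _ (by linarith) (by linarith)

theorem VaR_of_one_le (μ : Measure Ω) (X : Ω → ℝ) {α : ℝ} (hα : 1 ≤ α) : VaR μ X α = 0 := by
  have : {x | 1 - α ≤ distFun μ X x} = univ :=
    eq_univ_of_forall fun x => (sub_nonpos.2 hα).trans ENNReal.toReal_nonneg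
  rw [VaR, this, Real.sInf_of_not_bddBelow not_bddBelow_univ]

theorem VaR_comp_of_isLeast (μ : Measure Ω) [IsFiniteMeasure μ] {X : Ω → ℝ} {α : ℝ}
    (hVaR : IsLeast {x | 1 - α ≤ distFun μ X x} (VaR μ X α)) {t : ℝ → ℝ} (ht : Monotone t)
    (htc : ContinuousWithinAt t (Iio (VaR μ X α)) (VaR μ X α)) :
    VaR μ (fun ω => t (X ω)) α = t (VaR μ X α) := by
  refine IsLeast.csInf_eq ⟨?_, fun y hy => le_of_not_gt fun hyt => ?_⟩
  · exact hVaR.1.trans (distFun_le_of_forall_imp μ fun ω hω => ht hω)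
  · obtain ⟨x, hyx, hxm⟩ := ((htc.eventually (lt_mem_nhds hyt)).and self_mem_nhdsWithin).exists
    have hx : 1 - α ≤ distFun μ X x := hy.trans <| distFun_le_of_forall_imp μ
      fun ω hω => le_of_not_gt fun hxω => (hyx.trans_le (ht hxω.le)).not_ge hω
    exact (hVaR.2 hx).not_gt hxm

theorem Ceded.lipschitzWith_one {f : ℝ → ℝ} (hf : Ceded f) : LipschitzWith 1 f :=
  LipschitzWith.of_le_add fun x y => by
    rcases le_total x y with hxy | hyx
    · linarith [hf.1 hxy, dist_nonneg (x := x) (y := y)]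
    · linarith [hf.2.1 hyx, Real.dist_eq x y, le_abs_self (x - y)]

theorem Ceded.layer_le {f : ℝ → ℝ} (hf : Ceded f) (m : ℝ) {x : ℝ} (hx : 0 ≤ x) :
    layer (m - f m) (f m) x ≤ f x := by
  rcases le_total x m with hxm | hmx
  · refine (min_le_left _ _).trans (max_le ?_ (hf.2.2 x hx).1)
    linarith [hf.2.1 hxm]
  · exact (min_le_right _ _).trans (hf.1 hmx)

theorem layer_sub_self (m b : ℝ) : layer (m - b) b m = b := by
  rw [layer, sub_sub_cancel]
  exact min_eq_right (le_max_left _ _)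

theorem sub_layer_eq (a b x : ℝ) : x - layer a b x = max (min a x) (x - b) := by
  simp only [layer]
  grind

theorem monotone_sub_layer (a b : ℝ) : Monotone fun x => x - layer a b x := by
  simp only [sub_layer_eq]
  exact (monotone_const.min monotone_id).max fun _ _ h => sub_le_sub_right h b

theorem continuous_layer (a b : ℝ) : Continuous (layer a b) := by
  unfold layer
  fun_prop

theorem layer_dominated_and_VaR_retained_eq_general
    (μ : Measure Ω) [IsProbabilityMeasure μ] (X : Ω → ℝ)
    (hXm : Measurable X)
    (f : ℝ → ℝ) (hf : Ceded f) (α : ℝ) (hα : α ∈ Ioc (0:ℝ) 1) :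
    (∀ x, 0 ≤ x →
      layer (VaR μ X α - f (VaR μ X α)) (f (VaR μ X α)) x ≤ f x) ∧
    VaR μ (fun ω => X ω - layer (VaR μ X α - f (VaR μ X α)) (f (VaR μ X α)) (X ω)) α
      = VaR μ (fun ω => X ω - f (X ω)) α := by
  refine ⟨fun x hx => hf.layer_le _ hx, ?_⟩
  rcases hα.2.lt_or_eq with hα1 | rfl
  · have hVaR := isLeast_VaR μ hXm.aemeasurable hα.1 hα1
    rw [VaR_comp_of_isLeast μ hVaR (monotone_sub_layer _ _)
        (continuous_id.sub (continuous_layer _ _)).continuousWithinAt,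
      VaR_comp_of_isLeast μ hVaR hf.2.1
        (continuous_id.sub hf.lipschitzWith_one.continuous).continuousWithinAt,
      layer_sub_self]
  · rw [VaR_of_one_le μ _ le_rfl, VaR_of_one_le μ _ le_rfl]

/-- the layer treaty `h` built from a ceded loss function `f` satisfies
`h ≤ f` on ℝ≥0 and leaves the Value-at-Risk of the retained loss unchanged. -/
theorem layer_dominated_and_VaR_retained_eq
    (μ : Measure Ω) [IsProbabilityMeasure μ] (X : Ω → ℝ)
    (hXm : Measurable X) (hX0 : ∀ ω, 0 ≤ X ω) (hXi : Integrable X μ)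
    (f : ℝ → ℝ) (hf : Ceded f) (α : ℝ) (hα : α ∈ Ioc (0:ℝ) 1) :
    (∀ x, 0 ≤ x →
      layer (VaR μ X α - f (VaR μ X α)) (f (VaR μ X α)) x ≤ f x) ∧
    VaR μ (fun ω => X ω - layer (VaR μ X α - f (VaR μ X α)) (f (VaR μ X α)) (X ω)) α
      = VaR μ (fun ω => X ω - f (X ω)) α :=
  layer_dominated_and_VaR_retained_eq_general μ X hXm f hf α hα
end
end

section
/- Suppose all n insurers use Value-at-Risk at levels αᵢ ∈ (0,1] and the premium principle π is consistent with the usual stochastic order and 1-Lipschitz w.r.t. the supremum norm. Then the function Q(a₁,…,aₙ) = Σᵢ aᵢ + π(Σᵢ min{(Xᵢ - aᵢ)₊, VaR_{αᵢ}(Xᵢ) - aᵢ}) is componentwise increasing on ∏ᵢ [0, VaR_{αᵢ}(Xᵢ)]; hence (a₁,…,aₙ) = (0,…,0) minimizes Q, and the treaties fᵢ(x) = min{x, VaR_{αᵢ}(Xᵢ)} are socially optimal. -/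
/-!
Raising the deductible of layer `i` by `δ` lowers the total ceded loss pointwise by at most `δ`,
so the sup-norm Lipschitz property lets the premium fall by at most `∑ δ` while the sum of
deductibles rises by exactly `∑ δ`: the objective increases on the box and is minimal at `0`.
For an admissible treaty `g`, VaR commutes with the continuous increasing retention
`x ↦ x - g x`, so the layer with deductible `v - g v` below `v = VaR_α(X)` leaves the same VaR
of the retained loss as `g` while ceding pointwise less. As `π` respects `≤_st`, the cost of
`g` is at least `Q(v - g v) ≥ Q(0)`, and `Q(0)` is the cost of the full layers `min(x, v)`,
whose retained losses have VaR `0`.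
-/

open MeasureTheory ProbabilityTheory Set

noncomputable section

variable {Ω Ω' : Type*} [MeasurableSpace Ω] [MeasurableSpace Ω']

/-- The finite-dimensional objective of the VaR problem. -/
def Qobj {n : ℕ} (μ : Measure Ω) (X : Fin n → Ω → ℝ) (α : Fin n → ℝ)
    (π : (Ω → ℝ) → ℝ) (a : Fin n → ℝ) : ℝ :=
  (∑ i, a i) + π (fun ω => ∑ i, layer (a i) (VaR μ (X i) (α i) - a i) (X i ω))

namespace StieltjesFunction

theorem csInf_le_iff (f : StieltjesFunction ℝ) {c : ℝ} (hne : {x | c ≤ f x}.Nonempty)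
    (hbdd : BddBelow {x | c ≤ f x}) {x : ℝ} : sInf {x | c ≤ f x} ≤ x ↔ c ≤ f x := by
  refine ⟨fun hx => ?_, fun hx => csInf_le hbdd hx⟩
  have hright : ∀ y ∈ Ioi x, c ≤ f y := fun y hy => by
    obtain ⟨s, hs, hsy⟩ := exists_lt_of_csInf_lt hne (hx.trans_lt hy)
    exact hs.trans (f.mono hsy.le)
  exact ge_of_tendsto ((f.right_continuous x).mono Ioi_subset_Ici_self)
    (eventually_nhdsWithin_of_forall hright)

end StieltjesFunction

theorem layer_le_layer {a b v x : ℝ} (hab : a ≤ b) : layer b (v - b) x ≤ layer a (v - a) x :=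
  min_le_min (max_le_max (by linarith) le_rfl) (by linarith)

theorem layer_sub_layer_le {a b v x : ℝ} (hab : a ≤ b) :
    layer a (v - a) x - layer b (v - b) x ≤ b - a := by
  unfold layer
  simp only [min_def, max_def]
  split_ifs <;> linarith

theorem layer_nonneg {a v x : ℝ} (hav : a ≤ v) : 0 ≤ layer a (v - a) x :=
  le_min (le_max_right _ _) (sub_nonneg.2 hav)

namespace Ceded

variable {g : ℝ → ℝ}

theorem map_zero (hg : Ceded g) : g 0 = 0 :=
  le_antisymm (hg.2.2 0 le_rfl).2 (hg.2.2 0 le_rfl).1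

theorem lipschitzWith (hg : Ceded g) : LipschitzWith 1 g := by
  refine LipschitzWith.of_le_add fun x y => ?_
  rcases le_total x y with h | h
  · linarith [hg.1 h, dist_nonneg (x := x) (y := y)]
  · have hret : y - g y ≤ x - g x := hg.2.1 h
    rw [Real.dist_eq, abs_of_nonneg (sub_nonneg.2 h)]
    linarith

theorem layer_le_s17 (hg : Ceded g) {v x : ℝ} (hx : 0 ≤ x) : layer (v - g v) (g v) x ≤ g x := by
  rcases le_total x v with h | h
  · have hret : x - g x ≤ v - g v := hg.2.1 h
    exact (min_le_left _ _).trans (max_le (by linarith) (hg.2.2 x hx).1)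
  · exact (min_le_right _ _).trans (hg.1 h)

end Ceded

section VaR

open Filter

variable {Ω : Type*} [MeasurableSpace Ω] {μ : Measure Ω} {X : Ω → ℝ} {α : ℝ}

theorem distFun_le_distFun {Y : Ω → ℝ} [IsFiniteMeasure μ] {x y : ℝ}
    (h : {ω | X ω ≤ x} ⊆ {ω | Y ω ≤ y}) : distFun μ X x ≤ distFun μ Y y :=
  measureReal_mono h

theorem distFun_eq_cdf [IsProbabilityMeasure μ] (hX : Measurable X) :
    distFun μ X = cdf (μ.map X) := by
  funext x
  have := Measure.isProbabilityMeasure_map (μ := μ) hX.aemeasurable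
  rw [cdf_eq_real, map_measureReal_apply hX measurableSet_Iic]
  rfl

theorem VaR_one (μ : Measure Ω) (X : Ω → ℝ) : VaR μ X 1 = 0 := by
  have hunbdd : ¬BddBelow {x : ℝ | 1 - 1 ≤ distFun μ X x} := by
    rintro ⟨c, hc⟩
    have : c ≤ c - 1 := hc (by simp [distFun])
    linarith
  exact Real.sInf_of_not_bddBelow hunbdd

theorem VaR_le_iff [IsProbabilityMeasure μ] (hX : Measurable X) (hα : α ∈ Ioo 0 1) {x : ℝ} :
    VaR μ X α ≤ x ↔ 1 - α ≤ distFun μ X x := by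
  rw [VaR, distFun_eq_cdf hX]
  have hpos : 0 < 1 - α := by linarith [hα.2]
  have hlt : 1 - α < 1 := by linarith [hα.1]
  apply StieltjesFunction.csInf_le_iff
  · exact ((tendsto_cdf_atTop (μ := μ.map X)).eventually (eventually_ge_nhds hlt)).exists
  · obtain ⟨b, hb⟩ := eventually_atBot.1
      ((tendsto_cdf_atBot (μ := μ.map X)).eventually (eventually_lt_nhds hpos))
    exact ⟨b, fun y hy => le_of_not_gt fun hyb => (hb y hyb.le).not_ge hy⟩

theorem distFun_VaR_ge [IsProbabilityMeasure μ] (hX : Measurable X) (hα : α ∈ Ioo 0 1) :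
    1 - α ≤ distFun μ X (VaR μ X α) :=
  (VaR_le_iff hX hα).1 le_rfl

theorem VaR_comp_of_mem_Ioo [IsProbabilityMeasure μ] (hX : Measurable X) (hα : α ∈ Ioo 0 1)
    {r : ℝ → ℝ} (hr : Monotone r) (hrc : Continuous r) :
    VaR μ (fun ω => r (X ω)) α = r (VaR μ X α) := by
  have hrX : Measurable fun ω => r (X ω) := hrc.measurable.comp hX
  refine le_antisymm ((VaR_le_iff hrX hα).2 ?_) (le_of_not_gt fun hlt => ?_)
  · exact (distFun_VaR_ge hX hα).trans (distFun_le_distFun fun ω hω => hr hω)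
  · obtain ⟨x₀, hx₀, hrx₀⟩ := ((hrc.tendsto _).eventually (eventually_gt_nhds hlt)).exists_lt
    have hsub : {ω | r (X ω) ≤ VaR μ (fun ω => r (X ω)) α} ⊆ {ω | X ω ≤ x₀} :=
      fun ω hω => le_of_not_gt fun hx => (hrx₀.trans_le (hr hx.le)).not_ge hω
    exact hx₀.not_ge
      ((VaR_le_iff hX hα).2 ((distFun_VaR_ge hrX hα).trans (distFun_le_distFun hsub)))

/-- At `α = 1` both sides are the junk value `sInf univ = 0`, whence `r 0 = 0`. -/
theorem VaR_comp [IsProbabilityMeasure μ] (hX : Measurable X) (hα : α ∈ Ioc 0 1)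
    {r : ℝ → ℝ} (hr : Monotone r) (hrc : Continuous r) (hr0 : r 0 = 0) :
    VaR μ (fun ω => r (X ω)) α = r (VaR μ X α) := by
  rcases hα.2.eq_or_lt with rfl | hα1
  · rw [VaR_one, VaR_one, hr0]
  · exact VaR_comp_of_mem_Ioo hX ⟨hα.1, hα1⟩ hr hrc

theorem VaR_nonneg [IsProbabilityMeasure μ] (hX : Measurable X) (hX0 : ∀ ω, 0 ≤ X ω)
    (hα : α ∈ Ioc 0 1) : 0 ≤ VaR μ X α := by
  have hpos : (fun ω => max (X ω) 0) = X := funext fun ω => max_eq_left (hX0 ω)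
  have := VaR_comp (μ := μ) hX hα (r := fun x => max x 0) (monotone_id.max monotone_const)
    (continuous_id.max continuous_const) (max_self 0)
  rw [hpos] at this
  exact this ▸ le_max_right _ _

theorem VaR_sub_min_VaR [IsProbabilityMeasure μ] (hX : Measurable X) (hX0 : ∀ ω, 0 ≤ X ω)
    (hα : α ∈ Ioc 0 1) : VaR μ (fun ω => X ω - min (X ω) (VaR μ X α)) α = 0 := by
  have hv := VaR_nonneg (μ := μ) hX hX0 hα
  have hexcess : (fun ω => X ω - min (X ω) (VaR μ X α)) =
      fun ω => max (X ω - VaR μ X α) 0 := by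
    funext ω
    rcases le_total (X ω) (VaR μ X α) with h | h <;> simp [h]
  rw [hexcess, VaR_comp (μ := μ) hX hα (r := fun x => max (x - VaR μ X α) 0)
    (fun x y h => max_le_max (sub_le_sub_right h _) le_rfl)
    ((continuous_id.sub continuous_const).max continuous_const) (by simpa using hv)]
  simp

theorem VaR_sub_ceded [IsProbabilityMeasure μ] (hX : Measurable X) (hα : α ∈ Ioc 0 1)
    {g : ℝ → ℝ} (hg : Ceded g) :
    VaR μ (fun ω => X ω - g (X ω)) α = VaR μ X α - g (VaR μ X α) :=
  VaR_comp hX hα hg.2.1 (continuous_id.sub hg.lipschitzWith.continuous) (by simp [hg.map_zero])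

end VaR

theorem le_st_of_le {Ω : Type*} [MeasurableSpace Ω] {μ : Measure Ω} {W Z : Ω → ℝ}
    (h : ∀ ω, W ω ≤ Z ω) : le_st μ W μ Z :=
  fun _ hf hW hZ => integral_mono hW hZ fun ω => hf (h ω)

section Objective

variable {Ω : Type*} {n : ℕ} {X : Fin n → Ω → ℝ}

/-- The total ceded loss when risk `i` is covered by the layer `[a i, v i]`. -/
def layerSum (X : Fin n → Ω → ℝ) (v a : Fin n → ℝ) (ω : Ω) : ℝ :=
  ∑ i, layer (a i) (v i - a i) (X i ω)

theorem abs_layerSum_sub_layerSum_le {v a b : Fin n → ℝ} (hab : a ≤ b) (ω : Ω) :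
    |layerSum X v a ω - layerSum X v b ω| ≤ ∑ i, (b i - a i) := by
  rw [layerSum, layerSum, ← Finset.sum_sub_distrib, abs_of_nonneg
    (Finset.sum_nonneg fun i _ => sub_nonneg.2 (layer_le_layer (hab i)))]
  exact Finset.sum_le_sum fun i _ => layer_sub_layer_le (hab i)

variable [MeasurableSpace Ω] {μ : Measure Ω}

theorem Qobj_eq_add_layerSum (α : Fin n → ℝ) (π : (Ω → ℝ) → ℝ) (a : Fin n → ℝ) :
    Qobj μ X α π a = ∑ i, a i + π (layerSum X (fun i => VaR μ (X i) (α i)) a) :=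
  rfl

theorem Qobj_zero (hX0 : ∀ i ω, 0 ≤ X i ω) (α : Fin n → ℝ) (π : (Ω → ℝ) → ℝ) :
    Qobj μ X α π 0 = π (fun ω => ∑ i, min (X i ω) (VaR μ (X i) (α i))) := by
  simp [Qobj, layer, hX0]

theorem memLp_top_layerSum (hX : ∀ i, Measurable (X i)) {v a : Fin n → ℝ} (hav : a ≤ v) :
    MemLp (layerSum X v a) ⊤ μ := by
  have hmeas : Measurable (layerSum X v a) := Finset.measurable_sum _ fun i _ =>
    (((hX i).sub_const _).max measurable_const).min measurable_const
  refine memLp_top_of_bound hmeas.aestronglyMeasurable (∑ i, (v i - a i))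
    (ae_of_all μ fun ω => ?_)
  rw [Real.norm_eq_abs, layerSum,
    abs_of_nonneg (Finset.sum_nonneg fun i _ => layer_nonneg (hav i))]
  exact Finset.sum_le_sum fun i _ => min_le_right _ _

theorem sub_le_of_forall_abs_sub_le {π : (Ω → ℝ) → ℝ}
    (hπlip : ∀ W Z : Ω → ℝ, MemLp W ⊤ μ → MemLp Z ⊤ μ →
      |π W - π Z| ≤ (eLpNorm (fun ω => W ω - Z ω) ⊤ μ).toReal)
    {W Z : Ω → ℝ} (hW : MemLp W ⊤ μ) (hZ : MemLp Z ⊤ μ) {c : ℝ} (hc : 0 ≤ c)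
    (h : ∀ ω, |W ω - Z ω| ≤ c) : π W - π Z ≤ c := by
  have hnorm : eLpNorm (fun ω => W ω - Z ω) ⊤ μ ≤ ENNReal.ofReal c := by
    rw [eLpNorm_exponent_top]
    exact eLpNormEssSup_le_of_ae_bound (ae_of_all μ h)
  exact (le_abs_self _).trans
    ((hπlip W Z hW hZ).trans (ENNReal.toReal_le_of_le_ofReal hc hnorm))

theorem Qobj_monotoneOn (hX : ∀ i, Measurable (X i)) {α : Fin n → ℝ} {π : (Ω → ℝ) → ℝ}
    (hπlip : ∀ W Z : Ω → ℝ, MemLp W ⊤ μ → MemLp Z ⊤ μ →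
      |π W - π Z| ≤ (eLpNorm (fun ω => W ω - Z ω) ⊤ μ).toReal) :
    MonotoneOn (Qobj μ X α π) {a | a ≤ fun i => VaR μ (X i) (α i)} := by
  intro a ha b hb hab
  have hpremium := sub_le_of_forall_abs_sub_le hπlip (memLp_top_layerSum hX ha)
    (memLp_top_layerSum hX hb) (Finset.sum_nonneg fun i _ => sub_nonneg.2 (hab i))
    (abs_layerSum_sub_layerSum_le hab)
  rw [Finset.sum_sub_distrib] at hpremium
  rw [Qobj_eq_add_layerSum, Qobj_eq_add_layerSum]
  linarith

end Objective

theorem full_layer_socially_optimal_general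
    {n : ℕ} (μ : Measure Ω) [IsProbabilityMeasure μ]
    (X : Fin n → Ω → ℝ) (hXm : ∀ i, Measurable (X i))
    (hX0 : ∀ i ω, 0 ≤ X i ω)
    (α : Fin n → ℝ) (hα : ∀ i, α i ∈ Ioc (0:ℝ) 1)
    (π : (Ω → ℝ) → ℝ)
    (hπst : ∀ W Z : Ω → ℝ, le_st μ W μ Z → π W ≤ π Z)
    (hπlip : ∀ W Z : Ω → ℝ, MemLp W ⊤ μ → MemLp Z ⊤ μ →
      |π W - π Z| ≤ (eLpNorm (fun ω => W ω - Z ω) ⊤ μ).toReal) :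
    MonotoneOn (Qobj μ X α π) {a : Fin n → ℝ | ∀ i, a i ∈ Icc 0 (VaR μ (X i) (α i))} ∧
    (∀ a ∈ {a : Fin n → ℝ | ∀ i, a i ∈ Icc 0 (VaR μ (X i) (α i))},
      Qobj μ X α π 0 ≤ Qobj μ X α π a) ∧
    (∀ g : Fin n → ℝ → ℝ, (∀ i, Ceded (g i)) →
      (∑ i, VaR μ (fun ω => X i ω - min (X i ω) (VaR μ (X i) (α i))) (α i))
          + π (fun ω => ∑ i, min (X i ω) (VaR μ (X i) (α i)))
        ≤ (∑ i, VaR μ (fun ω => X i ω - g i (X i ω)) (α i))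
            + π (fun ω => ∑ i, g i (X i ω))) := by
  have hv0 i : 0 ≤ VaR μ (X i) (α i) := VaR_nonneg (hXm i) (hX0 i) (hα i)
  have hmono : MonotoneOn (Qobj μ X α π)
      {a : Fin n → ℝ | ∀ i, a i ∈ Icc 0 (VaR μ (X i) (α i))} :=
    (Qobj_monotoneOn hXm hπlip).mono fun a ha i => (ha i).2
  have hmin : ∀ a ∈ {a : Fin n → ℝ | ∀ i, a i ∈ Icc 0 (VaR μ (X i) (α i))},
      Qobj μ X α π 0 ≤ Qobj μ X α π a :=
    fun a ha => hmono (fun i => ⟨le_rfl, hv0 i⟩) ha fun i => (ha i).1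
  refine ⟨hmono, hmin, fun g hg => ?_⟩
  set a : Fin n → ℝ := fun i => VaR μ (X i) (α i) - g i (VaR μ (X i) (α i))
  have hga i := (hg i).2.2 _ (hv0 i)
  have hceded ω : layerSum X (fun i => VaR μ (X i) (α i)) a ω ≤ ∑ i, g i (X i ω) :=
    Finset.sum_le_sum fun i _ => by
      simpa only [a, sub_sub_cancel] using (hg i).layer_le_s17 (hX0 i ω)
  calc _ = Qobj μ X α π 0 := by simp [VaR_sub_min_VaR (hXm _) (hX0 _) (hα _), Qobj_zero hX0]
    _ ≤ Qobj μ X α π a := hmin a fun i => ⟨sub_nonneg.2 (hga i).2, sub_le_self _ (hga i).1⟩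
    _ ≤ _ := by
      rw [Qobj_eq_add_layerSum]
      simp only [a, VaR_sub_ceded (hXm _) (hα _) (hg _)]
      exact add_le_add_right (hπst _ _ (le_st_of_le hceded)) _

/-- when all insurers use VaR and π is `≤_st`-consistent and 1-Lipschitz
w.r.t. the sup norm, the objective is componentwise increasing, `(0,…,0)` minimizes it,
and the treaties `fᵢ(x) = min{x, VaR_{αᵢ}(Xᵢ)}` are socially optimal. -/
theorem full_layer_socially_optimal
    {n : ℕ} (μ : Measure Ω) [IsProbabilityMeasure μ]
    (X : Fin n → Ω → ℝ) (hXm : ∀ i, Measurable (X i))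
    (hX0 : ∀ i ω, 0 ≤ X i ω) (hXi : ∀ i, Integrable (X i) μ)
    (α : Fin n → ℝ) (hα : ∀ i, α i ∈ Ioc (0:ℝ) 1)
    (π : (Ω → ℝ) → ℝ)
    (hπst : ∀ W Z : Ω → ℝ, le_st μ W μ Z → π W ≤ π Z)
    (hπlip : ∀ W Z : Ω → ℝ, MemLp W ⊤ μ → MemLp Z ⊤ μ →
      |π W - π Z| ≤ (eLpNorm (fun ω => W ω - Z ω) ⊤ μ).toReal) :
    MonotoneOn (Qobj μ X α π) {a : Fin n → ℝ | ∀ i, a i ∈ Icc 0 (VaR μ (X i) (α i))} ∧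
    (∀ a ∈ {a : Fin n → ℝ | ∀ i, a i ∈ Icc 0 (VaR μ (X i) (α i))},
      Qobj μ X α π 0 ≤ Qobj μ X α π a) ∧
    (∀ g : Fin n → ℝ → ℝ, (∀ i, Ceded (g i)) →
      (∑ i, VaR μ (fun ω => X i ω - min (X i ω) (VaR μ (X i) (α i))) (α i))
          + π (fun ω => ∑ i, min (X i ω) (VaR μ (X i) (α i)))
        ≤ (∑ i, VaR μ (fun ω => X i ω - g i (X i ω)) (α i))
            + π (fun ω => ∑ i, g i (X i ω))) :=
  full_layer_socially_optimal_general μ X hXm hX0 α hα π hπst hπlip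
end
end
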